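/- Let r ≥ 0, let D ∈ D_n be a Dyck word, and let D' = Ψ_r(D). Then the number of tunnels of D with midpoint at x = n+r (i.e., decompositions D = AuBdC with B a Dyck word and length(A) = length(C) + 2r) equals the number of hills of D' lying in x > 2r (i.e., decompositions D' = XudY with X, Y Dyck words and length(X) ≥ 2r). -/

import Mathlib

attribute [local instance] Classical.propDecidable

namespace DyckBij

/-- A word over `Bool` (`true` = up-step `u`, `false` = down-step `d`) is a Dyck word:
equally many `u`'s and `d`'s, and every prefix has at least as many `u`'s as `d`'s. -/
def IsDyck (w : List Bool) : Prop :=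
  w.count false = w.count true ∧
    ∀ p : List Bool, p <+: w → p.count false ≤ p.count true

/-- `Matched w i j`: the `u` at (0-indexed) position `i` of `w` is matched (as in matched
parentheses) with the `d` at position `j`, i.e. `w = A u B d C` with `B` a Dyck word,
`|A| = i` and `j = i + |B| + 1`. -/
def Matched (w : List Bool) (i j : ℕ) : Prop :=
  ∃ A B C : List Bool, IsDyck B ∧ w = A ++ true :: (B ++ false :: C) ∧
    A.length = i ∧ j = i + B.length + 1

/-- Positions `i` and `j` form a matched pair of steps of `w`. -/
def MatchPair (w : List Bool) (i j : ℕ) : Prop :=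
  Matched w i j ∨ Matched w j i

/-- The 0-indexed reading order `σ^{(r)}` on a word of length `L`: the first `2r` positions
are read in order, and the remaining positions are read in zigzag
`2r, L-1, 2r+1, L-2, …` (0-indexed). For `r = 0` this is the zigzag order `σ`. -/
def zigR (r L p : ℕ) : ℕ :=
  if p < 2 * r then p
  else if p % 2 = 0 then p / 2 + r
  else L + r - (p + 1) / 2

/-- The bijection `Ψ_r`: the `p`-th letter of `Ψ_r(w)` is `u` iff the match of the
`σ^{(r)}_p`-th step of `w` does not occur among the previously read steps
`σ^{(r)}_0, …, σ^{(r)}_{p-1}`. -/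
noncomputable def psiR (r : ℕ) (w : List Bool) : List Bool :=
  List.ofFn fun p : Fin w.length =>
    if ∃ p' : ℕ, p' < (p : ℕ) ∧
        MatchPair w (zigR r w.length p') (zigR r w.length (p : ℕ))
    then false else true

/-- The bijection `Ψ = Ψ_0`. -/
noncomputable def psi : List Bool → List Bool := psiR 0

/-- Number of tunnels of `w` with `|A| = |C| + 2r` (midpoint at `x = n + r`),
i.e. decompositions `w = A u B d C` with `B` a Dyck word; tunnels are indexed by `|A|`. -/
noncomputable def tunEq (r : ℕ) (w : List Bool) : ℕ :=
  {i : ℕ | ∃ A B C : List Bool, IsDyck B ∧ w = A ++ true :: (B ++ false :: C) ∧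
    A.length = i ∧ A.length = C.length + 2 * r}.ncard

/-- Number of tunnels of `w` with `|A| > |C| + 2r` (midpoint in `x > n + r`). -/
noncomputable def tunGt (r : ℕ) (w : List Bool) : ℕ :=
  {i : ℕ | ∃ A B C : List Bool, IsDyck B ∧ w = A ++ true :: (B ++ false :: C) ∧
    A.length = i ∧ C.length + 2 * r < A.length}.ncard

/-- Number of tunnels of `w` with `|A| ≤ |C| + 2r` (midpoint in `x ≤ n + r`). -/
noncomputable def tunLe (r : ℕ) (w : List Bool) : ℕ :=
  {i : ℕ | ∃ A B C : List Bool, IsDyck B ∧ w = A ++ true :: (B ++ false :: C) ∧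
    A.length = i ∧ A.length ≤ C.length + 2 * r}.ncard

/-- Number of centered tunnels `ct(w)`. -/
noncomputable def ctun (w : List Bool) : ℕ := tunEq 0 w

/-- Number of right tunnels `rt(w)`. -/
noncomputable def rtun (w : List Bool) : ℕ := tunGt 0 w

/-- Number of left tunnels `lt(w)`: tunnels with `|A| < |C|`. -/
noncomputable def ltun (w : List Bool) : ℕ :=
  {i : ℕ | ∃ A B C : List Bool, IsDyck B ∧ w = A ++ true :: (B ++ false :: C) ∧
    A.length = i ∧ A.length < C.length}.ncard

/-- Number of multitunnels of `w` with `|A| = |C| + 2r` (midpoint at `x = n + r`):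
decompositions `w = A B C` with `B` a nonempty Dyck word, indexed by `(|A|, |B|)`. -/
noncomputable def mtunEq (r : ℕ) (w : List Bool) : ℕ :=
  {q : ℕ × ℕ | ∃ A B C : List Bool, IsDyck B ∧ B ≠ [] ∧ w = A ++ B ++ C ∧
    A.length = q.1 ∧ B.length = q.2 ∧ A.length = C.length + 2 * r}.ncard

/-- Number of centered multitunnels `cmt(w)`. -/
noncomputable def cmtun (w : List Bool) : ℕ := mtunEq 0 w

/-- Number of hills `h(w)`: decompositions `w = X u d Y` with `X, Y` Dyck words. -/
noncomputable def numHills (w : List Bool) : ℕ :=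
  {i : ℕ | ∃ X Y : List Bool, IsDyck X ∧ IsDyck Y ∧
    w = X ++ true :: false :: Y ∧ X.length = i}.ncard

/-- Number of hills of `w` lying in `x > 2r`, i.e. with `|X| ≥ 2r`. -/
noncomputable def numHillsAfter (r : ℕ) (w : List Bool) : ℕ :=
  {i : ℕ | ∃ X Y : List Bool, IsDyck X ∧ IsDyck Y ∧
    w = X ++ true :: false :: Y ∧ X.length = i ∧ 2 * r ≤ X.length}.ncard

/-- Number of arches (equivalently, returns) `ret(w)`: decompositions
`w = X (u B d) Y` with `X, B, Y` Dyck words. -/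
noncomputable def numArches (w : List Bool) : ℕ :=
  {i : ℕ | ∃ X B Y : List Bool, IsDyck X ∧ IsDyck B ∧ IsDyck Y ∧
    w = X ++ true :: (B ++ false :: Y) ∧ X.length = i}.ncard

/-- Number of arches of `w` lying in `x ≥ 2r`, i.e. with `|X| ≥ 2r`. -/
noncomputable def numArchesAfter (r : ℕ) (w : List Bool) : ℕ :=
  {i : ℕ | ∃ X B Y : List Bool, IsDyck X ∧ IsDyck B ∧ IsDyck Y ∧
    w = X ++ true :: (B ++ false :: Y) ∧ X.length = i ∧ 2 * r ≤ X.length}.ncard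

/-- Number of odd rises `odr(w)`: `u`-steps at odd 1-indexed positions
(even 0-indexed positions). -/
noncomputable def oddRises (w : List Bool) : ℕ :=
  {p : ℕ | p < w.length ∧ p % 2 = 0 ∧ w.getD p false = true}.ncard

/-- Number of even rises `er(w)`: `u`-steps at even 1-indexed positions
(odd 0-indexed positions). -/
noncomputable def evenRises (w : List Bool) : ℕ :=
  {p : ℕ | p < w.length ∧ p % 2 = 1 ∧ w.getD p false = true}.ncard

/-- Number of odd rises of `w` at 1-indexed positions `> 2r`. -/
noncomputable def oddRisesAfter (r : ℕ) (w : List Bool) : ℕ :=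
  {p : ℕ | p < w.length ∧ p % 2 = 0 ∧ 2 * r ≤ p ∧ w.getD p false = true}.ncard

/-- Number of even rises of `w` at 1-indexed positions `> 2r`. -/
noncomputable def evenRisesAfter (r : ℕ) (w : List Bool) : ℕ :=
  {p : ℕ | p < w.length ∧ p % 2 = 1 ∧ 2 * r ≤ p ∧ w.getD p false = true}.ncard

/-- Number of `u`-steps of `w` at 1-indexed positions `≤ 2r`. -/
noncomputable def upstepsBefore (r : ℕ) (w : List Bool) : ℕ :=
  {p : ℕ | p < w.length ∧ p < 2 * r ∧ w.getD p false = true}.ncard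

/-- Number of peaks of `w`: occurrences of the factor `u d`. -/
noncomputable def numPeaks (w : List Bool) : ℕ :=
  {i : ℕ | i + 2 ≤ w.length ∧ w.getD i false = true ∧ w.getD (i + 1) true = false}.ncard

/-- Number of occurrences in `w` of a factor of length 3 beginning with `u`
and ending with `d` (occurrences of `u⋆d`). -/
noncomputable def numUStarD (w : List Bool) : ℕ :=
  {i : ℕ | i + 3 ≤ w.length ∧ w.getD i false = true ∧ w.getD (i + 2) true = false}.ncard

/-- `ih(w)`: 1 if `w` begins with the factor `u d`, else 0. -/
noncomputable def initHill (w : List Bool) : ℕ :=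
  if w.take 2 = [true, false] then 1 else 0

/-- `fh(w)`: 1 if `w = X u d` with `X` a Dyck word, else 0. -/
noncomputable def finHill (w : List Bool) : ℕ :=
  if ∃ X : List Bool, IsDyck X ∧ w = X ++ [true, false] then 1 else 0

/-- `π` avoids the pattern 321. -/
def Avoids321 {n : ℕ} (π : Equiv.Perm (Fin n)) : Prop :=
  ¬ ∃ i j k : Fin n, i < j ∧ j < k ∧ π k < π j ∧ π j < π i

/-- `π` avoids the pattern 132. -/
def Avoids132 {n : ℕ} (π : Equiv.Perm (Fin n)) : Prop :=
  ¬ ∃ i j k : Fin n, i < j ∧ j < k ∧ π i < π k ∧ π k < π j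

/-- Number of fixed points of `π`. -/
noncomputable def fixedPts {n : ℕ} (π : Equiv.Perm (Fin n)) : ℕ :=
  {i : Fin n | π i = i}.ncard

/-- Number of excedances of `π`. -/
noncomputable def excedances {n : ℕ} (π : Equiv.Perm (Fin n)) : ℕ :=
  {i : Fin n | i < π i}.ncard

/-- Number of descents of `π`. -/
noncomputable def descents {n : ℕ} (π : Equiv.Perm (Fin n)) : ℕ :=
  {i : ℕ | ∃ (h1 : i < n) (h2 : i + 1 < n), π ⟨i + 1, h2⟩ < π ⟨i, h1⟩}.ncard

/-- `α_r(π) = #{i : π(i) = i + r}` (stated 0-indexed, equivalent to the 1-indexed version). -/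
noncomputable def alphaStat {n : ℕ} (r : ℕ) (π : Equiv.Perm (Fin n)) : ℕ :=
  {i : Fin n | (π i : ℕ) = (i : ℕ) + r}.ncard

/-- `β_r(π) = #{i : i > r, π(i) = i}` (for 1-indexed `i`; 0-indexed this is `r ≤ i`). -/
noncomputable def betaStat {n : ℕ} (r : ℕ) (π : Equiv.Perm (Fin n)) : ℕ :=
  {i : Fin n | r ≤ (i : ℕ) ∧ π i = i}.ncard

/-!
Reading `D` in the order `σ^{(r)}` turns its matching into a fixed-point-free involution `τ` of
`{0, …, 2n-1}`, and `Ψ_r(D)` is the word whose up-steps are the positions `p` with `p < τ p`. A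
prefix of length `p` of such a word is a Dyck word iff `τ` maps `{0, …, p-1}` into itself, so
`Ψ_r(D)` has a hill right after its prefix of length `2k ≥ 2r` iff `τ (2k) = 2k + 1` and that
prefix is `τ`-closed. Steps `2k` and `2k + 1` of `σ^{(r)}` read the positions `k + r` and
`2n + r - 1 - k` of `D`, so `τ (2k) = 2k + 1` says that `D` has a tunnel between them, i.e. one
with midpoint `n + r`; the prefix is then `τ`-closed because matchings are non-crossing.
-/

open List Set

section Dyck

variable {w B C B' C' X Y : List Bool}

theorem IsDyck.length_eq (hw : IsDyck w) : w.length = 2 * w.count true := by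
  have := count_true_add_count_false w
  have := hw.1
  omega

theorem IsDyck.right_of_append (h : IsDyck (X ++ Y)) (hX : X.count false = X.count true) :
    IsDyck Y := by
  refine ⟨?_, fun P hP => ?_⟩
  · have := h.1
    simp only [count_append] at this
    omega
  · have := h.2 (X ++ P) (prefix_append_right_inj X |>.2 hP)
    simp only [count_append] at this
    omega

theorem exists_isDyck_append_false {S : List Bool} (hS : S.count true < S.count false) :
    ∃ B C, IsDyck B ∧ S = B ++ false :: C := by
  have hex : ∃ k, (S.take k).count true < (S.take k).count false := ⟨S.length, by simpa⟩
  set k := Nat.find hex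
  have hk : (S.take k).count true < (S.take k).count false := Nat.find_spec hex
  have hmin : ∀ m < k, (S.take m).count false ≤ (S.take m).count true :=
    fun m hm => not_lt.1 (Nat.find_min hex hm)
  have hk0 : k ≠ 0 := by
    intro h0
    simp [h0] at hk
  have hkS : k - 1 < S.length := by
    by_contra h
    have := hmin (k - 1) (by omega)
    rw [take_of_length_le (by omega)] at this
    rw [take_of_length_le (by omega)] at hk
    omega
  have htake : S.take k = S.take (k - 1) ++ [S[k - 1]] := by
    conv_lhs => rw [show k = k - 1 + 1 by omega]
    exact (take_concat_get' S (k - 1) hkS).symm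
  have hprev := hmin (k - 1) (by omega)
  have hlast : S[k - 1] = false := by
    cases h : S[k - 1]
    · rfl
    · rw [htake, h] at hk
      grind
  refine ⟨S.take (k - 1), S.drop k, ⟨?_, fun P hP => ?_⟩, ?_⟩
  · rw [htake, hlast] at hk
    grind
  · rw [prefix_iff_eq_take.1 hP, take_take]
    exact hmin _ (by omega)
  · conv_lhs => rw [← take_append_drop k S, htake, hlast]
    simp

theorem IsDyck.exists_eq_cons_append (hw : IsDyck w) (hne : w ≠ []) :
    ∃ B C, IsDyck B ∧ IsDyck C ∧ w = true :: (B ++ false :: C) := by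
  obtain ⟨x, t, rfl⟩ := exists_cons_of_ne_nil hne
  have hx : x = true := by
    have := hw.2 [x] (by simp)
    cases x <;> simp_all
  subst hx
  have hbal := hw.1
  obtain ⟨B, C, hB, rfl⟩ := exists_isDyck_append_false (S := t) (by grind)
  refine ⟨B, C, hB, IsDyck.right_of_append (X := true :: B ++ [false]) (by simpa using hw) ?_,
    rfl⟩
  have := hB.1
  grind

theorem IsDyck.not_append_false_prefix (hB : IsDyck B) (hB' : IsDyck B') :
    ¬ B ++ [false] <+: B' := by
  intro h
  have := hB'.2 _ h
  have := hB.1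
  grind

theorem IsDyck.eq_of_append_false (hB : IsDyck B) (hB' : IsDyck B')
    (h : B ++ false :: C = B' ++ false :: C') : B = B' := by
  have hnot_lt : ∀ {B B' C C' : List Bool}, IsDyck B → IsDyck B' →
      B ++ false :: C = B' ++ false :: C' → ¬ B.length < B'.length := by
    intro B B' C C' hB hB' h hlt
    refine hB.not_append_false_prefix hB' ⟨B'.drop (B.length + 1), ?_⟩
    have := congrArg (take (B.length + 1)) h
    rw [take_append_of_le_length hlt, take_append, take_of_length_le (by omega)] at this
    simp only [add_tsub_cancel_left, take_succ_cons, take_zero] at this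
    rw [this, take_append_drop]
  exact (append_inj h (by have := hnot_lt hB hB' h; have := hnot_lt hB' hB h.symm; omega)).1

end Dyck

section Matching

variable {w B : List Bool} {i j : ℕ}

theorem Matched.lt (h : Matched w i j) : i < j := by
  obtain ⟨A, B, C, -, -, rfl, rfl⟩ := h
  omega

theorem Matched.lt_length (h : Matched w i j) : j < w.length := by
  obtain ⟨A, B, C, -, rfl, rfl, rfl⟩ := h
  simp only [length_append, length_cons]
  omega

theorem Matched.getElem_left (h : Matched w i j) : w[i]? = some true := by
  obtain ⟨A, B, C, -, rfl, rfl, -⟩ := h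
  simp

theorem Matched.getElem_right (h : Matched w i j) : w[j]? = some false := by
  obtain ⟨A, B, C, -, rfl, rfl, rfl⟩ := h
  rw [show A ++ true :: (B ++ false :: C) = (A ++ true :: B) ++ false :: C by simp,
    getElem?_append_right (by simp only [length_append, length_cons]; omega)]
  simp

theorem Matched.append (h : Matched B i j) (A C : List Bool) :
    Matched (A ++ B ++ C) (A.length + i) (A.length + j) := by
  obtain ⟨A', B', C', hB', rfl, rfl, rfl⟩ := h
  exact ⟨A ++ A', B', C' ++ C, hB', by simp, by simp, by omega⟩

theorem MatchPair.symm (h : MatchPair w i j) : MatchPair w j i := h.elim Or.inr Or.inl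

theorem MatchPair.append (h : MatchPair B i j) (A C : List Bool) :
    MatchPair (A ++ B ++ C) (A.length + i) (A.length + j) :=
  h.imp (·.append A C) (·.append A C)

theorem MatchPair.lt_length (h : MatchPair w i j) : i < w.length :=
  h.elim (fun h => h.lt.trans h.lt_length) Matched.lt_length

theorem IsDyck.exists_matchPair (hw : IsDyck w) (hi : i < w.length) : ∃ j, MatchPair w i j := by
  induction hn : w.length using Nat.strong_induction_on generalizing w i with
  | _ n ih =>
    obtain ⟨B, C, hB, hC, rfl⟩ := hw.exists_eq_cons_append (ne_nil_of_length_pos (by omega))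
    simp only [length_cons, length_append] at hn hi
    rcases Nat.lt_or_ge (B.length + 1) i with hiC | hiB
    · obtain ⟨j, hj⟩ := ih C.length (by omega) hC (i := i - (B.length + 2)) (by omega) rfl
      refine ⟨B.length + 2 + j, ?_⟩
      simpa [show B.length + 2 + (i - (B.length + 2)) = i by omega] using
        hj.append (true :: B ++ [false]) []
    rcases Nat.eq_zero_or_pos i with rfl | hi0
    · exact ⟨B.length + 1, Or.inl ⟨[], B, C, hB, rfl, rfl, by simp⟩⟩
    rcases Nat.lt_or_ge i (B.length + 1) with hiB | hiB
    · obtain ⟨j, hj⟩ := ih B.length (by omega) hB (i := i - 1) (by omega) rfl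
      refine ⟨1 + j, ?_⟩
      simpa [show 1 + (i - 1) = i by omega] using hj.append [true] (false :: C)
    · exact ⟨0, Or.inr ⟨[], B, C, hB, rfl, rfl, by omega⟩⟩

end Matching

section Uniqueness

variable {w : List Bool} {i i' j j' x a b : ℕ}

theorem Matched.right_unique (h : Matched w i j) (h' : Matched w i j') : j = j' := by
  obtain ⟨A, B, C, hB, hw, hA, rfl⟩ := h
  obtain ⟨A', B', C', hB', hw', hA', rfl⟩ := h'
  have := (append_inj (hw.symm.trans hw') (by omega)).2
  simp only [cons.injEq, true_and] at this
  rw [hB.eq_of_append_false hB' this]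

theorem Matched.exists_matchPair_of_mem_Ioo (hab : Matched w a b) (hx : x ∈ Ioo a b) :
    ∃ y ∈ Ioo a b, MatchPair w x y := by
  obtain ⟨A, B, C, hB, rfl, rfl, rfl⟩ := hab
  obtain ⟨j, hj⟩ := hB.exists_matchPair (i := x - (A.length + 1)) (by grind)
  refine ⟨A.length + 1 + j, ⟨by omega, by have := hj.symm.lt_length; omega⟩, ?_⟩
  simpa [show A.length + 1 + (x - (A.length + 1)) = x by grind] using
    hj.append (A ++ [true]) (false :: C)

theorem Matched.left_unique (h : Matched w i j) (h' : Matched w i' j) : i = i' := by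
  by_contra hne
  wlog hlt : i < i' generalizing i i'
  · exact this h' h (Ne.symm hne) (by omega)
  obtain ⟨y, hy, hy'⟩ := h.exists_matchPair_of_mem_Ioo ⟨hlt, h'.lt⟩
  rcases hy' with hy' | hy'
  · exact hy.2.ne (hy'.right_unique h')
  · exact absurd (h'.getElem_left.symm.trans hy'.getElem_right) (by simp)

theorem MatchPair.unique (h : MatchPair w i j) (h' : MatchPair w i j') : j = j' := by
  rcases h with h | h <;> rcases h' with h' | h'
  · exact h.right_unique h'
  · exact absurd (h.getElem_left.symm.trans h'.getElem_right) (by simp)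
  · exact absurd (h'.getElem_left.symm.trans h.getElem_right) (by simp)
  · exact h.left_unique h'

end Uniqueness

/-- Junk value `i` when `i` has no partner in `w`. -/
noncomputable def mate (w : List Bool) (i : ℕ) : ℕ :=
  if h : ∃ j, MatchPair w i j then h.choose else i

section Mate

variable {w : List Bool} {i j x a b : ℕ}

theorem mate_eq (h : MatchPair w i j) : mate w i = j := by
  have hex : ∃ j, MatchPair w i j := ⟨j, h⟩
  rw [mate, dif_pos hex]
  exact hex.choose_spec.unique h

theorem IsDyck.matchPair_mate (hw : IsDyck w) (hi : i < w.length) : MatchPair w i (mate w i) := by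
  obtain ⟨j, hj⟩ := hw.exists_matchPair hi
  rwa [mate_eq hj]

theorem IsDyck.mate_mate (hw : IsDyck w) (hi : i < w.length) : mate w (mate w i) = i :=
  mate_eq (hw.matchPair_mate hi).symm

theorem IsDyck.mate_lt_length (hw : IsDyck w) (hi : i < w.length) : mate w i < w.length :=
  (hw.matchPair_mate hi).symm.lt_length

theorem IsDyck.mate_ne (hw : IsDyck w) (hi : i < w.length) : mate w i ≠ i := by
  rcases hw.matchPair_mate hi with h | h
  · exact h.lt.ne'
  · exact h.lt.ne

theorem Matched.mate_mem_Ioo (hab : Matched w a b) (hx : x ∈ Ioo a b) : mate w x ∈ Ioo a b := by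
  obtain ⟨y, hy, hxy⟩ := hab.exists_matchPair_of_mem_Ioo hx
  rwa [mate_eq hxy]

theorem IsDyck.mate_notMem_Icc (hw : IsDyck w) (hab : Matched w a b) (hx : x < w.length)
    (hxab : x ∉ Icc a b) : mate w x ∉ Icc a b := by
  intro hm
  have hinv := hw.mate_mate hx
  rcases eq_or_ne (mate w x) a with ha | ha
  · rw [ha, mate_eq (Or.inl hab)] at hinv
    exact hxab (hinv ▸ ⟨hab.lt.le, le_rfl⟩)
  rcases eq_or_ne (mate w x) b with hb | hb
  · rw [hb, mate_eq (Or.inr hab)] at hinv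
    exact hxab (hinv ▸ ⟨le_rfl, hab.lt.le⟩)
  have := hab.mate_mem_Ioo ⟨hm.1.lt_of_ne' ha, hm.2.lt_of_ne hb⟩
  rw [hinv] at this
  exact hxab (Ioo_subset_Icc_self this)

end Mate

structure IsPerfectMatching (τ : ℕ → ℕ) (L : ℕ) : Prop where
  lt : ∀ p < L, τ p < L
  invol : ∀ p < L, τ (τ p) = p
  ne : ∀ p < L, τ p ≠ p

def openerWord (τ : ℕ → ℕ) (L : ℕ) : List Bool :=
  (List.range L).map fun p => decide (p < τ p)

section OpenerWord

variable {τ : ℕ → ℕ} {L p : ℕ}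

@[simp] theorem length_openerWord : (openerWord τ L).length = L := by
  simp [openerWord]

theorem openerWord_succ : openerWord τ (p + 1) = openerWord τ p ++ [decide (p < τ p)] := by
  simp [openerWord, range_succ]

theorem take_openerWord (h : p ≤ L) : (openerWord τ L).take p = openerWord τ p := by
  simp [openerWord, ← map_take, take_range, h]

theorem openerWord_eq_append (h : p + 2 ≤ L) :
    openerWord τ L = openerWord τ p ++
      decide (p < τ p) :: decide (p + 1 < τ (p + 1)) :: (openerWord τ L).drop (p + 2) := by
  conv_lhs => rw [← take_append_drop (p + 2) (openerWord τ L), take_openerWord h,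
    openerWord_succ, openerWord_succ]
  simp

theorem count_openerWord (b : Bool) :
    (openerWord τ p).count b = {q ∈ Finset.range p | decide (q < τ q) = b}.card := by
  rw [Finset.card_def, Finset.filter_val, Finset.range_val, Multiset.range, Multiset.filter_coe,
    Multiset.coe_card]
  simp only [openerWord, count_eq_countP, countP_eq_length_filter, filter_map, length_map]
  rfl

/-- `τ` pairs the closers among the first `p` positions with openers among them; the openers
left over are those whose partner lies beyond `p`. -/
theorem IsPerfectMatching.card_openers (hτ : IsPerfectMatching τ L) (hp : p ≤ L) :
    {q ∈ Finset.range p | q < τ q}.card =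
      {q ∈ Finset.range p | ¬ q < τ q}.card + {q ∈ Finset.range p | p ≤ τ q}.card := by
  have himage : {q ∈ Finset.range p | ¬ q < τ q}.image τ =
      {q ∈ Finset.range p | q < τ q ∧ τ q < p} := by
    ext q
    simp only [Finset.mem_image, Finset.mem_filter, Finset.mem_range]
    constructor
    · rintro ⟨q', ⟨hq'p, hq'⟩, rfl⟩
      have := hτ.invol q' (by omega)
      have := hτ.ne q' (by omega)
      omega
    · rintro ⟨hqp, hq, hτq⟩
      exact ⟨τ q, ⟨hτq, by rw [hτ.invol q (by omega)]; omega⟩, hτ.invol q (by omega)⟩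
  have hinj : InjOn τ ({q ∈ Finset.range p | ¬ q < τ q} : Finset ℕ) := by
    intro x hx y hy hxy
    simp only [Finset.coe_filter, Finset.mem_range, mem_ofPred_eq] at hx hy
    rw [← hτ.invol x (by omega), hxy, hτ.invol y (by omega)]
  rw [← Finset.card_image_of_injOn hinj, himage,
    ← Finset.card_filter_add_card_filter_not (s := {q ∈ Finset.range p | q < τ q}) (τ · < p),
    Finset.filter_filter, Finset.filter_filter]
  congr 2
  ext q
  simp only [Finset.mem_filter, Finset.mem_range]
  omega

theorem IsPerfectMatching.isDyck_openerWord_iff (hτ : IsPerfectMatching τ L) (hp : p ≤ L) :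
    IsDyck (openerWord τ p) ↔ MapsTo τ (Iio p) (Iio p) := by
  have hcount : ∀ k ≤ p, (openerWord τ k).count true =
      (openerWord τ k).count false + {q ∈ Finset.range k | k ≤ τ q}.card := by
    intro k hk
    simpa [count_openerWord] using hτ.card_openers (hk.trans hp)
  have hclosed : {q ∈ Finset.range p | p ≤ τ q}.card = 0 ↔ MapsTo τ (Iio p) (Iio p) := by
    simp [Finset.filter_eq_empty_iff, MapsTo]
  rw [← hclosed]
  have hp' := hcount p le_rfl
  refine ⟨fun h => by have := h.1; omega, fun h => ⟨by omega, fun P hP => ?_⟩⟩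
  have hPp : P.length ≤ p := by simpa using hP.length_le
  rw [prefix_iff_eq_take.1 hP, take_openerWord hPp]
  have := hcount _ hPp
  omega

theorem IsPerfectMatching.hill_iff (hτ : IsPerfectMatching τ L) :
    (∃ X Y, IsDyck X ∧ IsDyck Y ∧ openerWord τ L = X ++ true :: false :: Y ∧
        X.length = p) ↔
      p + 1 < L ∧ τ p = p + 1 ∧ MapsTo τ (Iio p) (Iio p) := by
  constructor
  · rintro ⟨X, Y, hX, -, hw, rfl⟩
    have hL : X.length + 2 ≤ L := by
      have := congrArg length hw
      simp only [length_openerWord, length_append, length_cons] at this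
      omega
    rw [openerWord_eq_append hL] at hw
    obtain ⟨hXeq, hletters⟩ := append_inj hw (by simp)
    simp only [cons.injEq, decide_eq_true_eq, decide_eq_false_iff_not] at hletters
    rw [← hXeq, hτ.isDyck_openerWord_iff (by omega)] at hX
    have hne := hτ.ne (X.length + 1) (by omega)
    have hinv := hτ.invol (X.length + 1) (by omega)
    have hτ1 : τ (X.length + 1) = X.length := by
      by_contra h
      have := hX (show τ (X.length + 1) ∈ Iio X.length by rw [mem_Iio]; omega)
      simp_all
    refine ⟨by omega, by rw [← hinv, hτ1], hX⟩
  · rintro ⟨hpL, hτp, hmaps⟩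
    have hτ1 : τ (p + 1) = p := by rw [← hτp, hτ.invol p (by omega)]
    have hw : openerWord τ L =
        openerWord τ p ++ true :: false :: (openerWord τ L).drop (p + 2) := by
      conv_lhs => rw [openerWord_eq_append (show p + 2 ≤ L by omega), hτp, hτ1]
      simp
    have hX := (hτ.isDyck_openerWord_iff (by omega)).2 hmaps
    have hW := (hτ.isDyck_openerWord_iff le_rfl).2 fun q hq => hτ.lt q hq
    refine ⟨_, _, hX, IsDyck.right_of_append (X := openerWord τ p ++ [true, false]) ?_ ?_, hw,
      by simp⟩
    · simpa using hw ▸ hW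
    · have := hX.1
      grind

end OpenerWord

def unzigR (r n q : ℕ) : ℕ :=
  if q < 2 * r then q else if q < n + r then 2 * (q - r) else 2 * (2 * n + r - 1 - q) + 1

section ReadingOrder

variable {r n p q k : ℕ}

theorem zigR_lt (hp : p < 2 * n) : zigR r (2 * n) p < 2 * n := by
  unfold zigR
  split_ifs <;> omega

theorem unzigR_zigR (hp : p < 2 * n) : unzigR r n (zigR r (2 * n) p) = p := by
  unfold zigR unzigR
  split_ifs <;> omega

theorem zigR_unzigR (hq : q < 2 * n) : zigR r (2 * n) (unzigR r n q) = q := by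
  unfold zigR unzigR
  split_ifs <;> omega

theorem zigR_two_mul (hrk : r ≤ k) : zigR r (2 * n) (2 * k) = k + r := by
  unfold zigR
  split_ifs <;> omega

theorem zigR_two_mul_add_one (hrk : r ≤ k) : zigR r (2 * n) (2 * k + 1) = 2 * n + r - 1 - k := by
  unfold zigR
  split_ifs <;> omega

theorem unzigR_lt_two_mul_iff (hrk : r ≤ k) (hkn : k < n) (hq : q < 2 * n) :
    unzigR r n q < 2 * k ↔ q ∉ Icc (k + r) (2 * n + r - 1 - k) := by
  simp only [unzigR, mem_Icc, not_and_or, not_le]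
  split_ifs <;> omega

end ReadingOrder

/-- The matching of `w` read in the order `σ^{(r)}`; `psiR r w` is its `openerWord`. -/
noncomputable def readMate (r n : ℕ) (w : List Bool) (p : ℕ) : ℕ :=
  unzigR r n (mate w (zigR r (2 * n) p))

section Psi

variable {r n k p : ℕ} {w : List Bool}

@[simp] theorem length_psiR : (psiR r w).length = w.length := by
  simp [psiR]

theorem IsDyck.mate_zigR_lt (hw : IsDyck w) (hlen : w.length = 2 * n) (hp : p < 2 * n) :
    mate w (zigR r (2 * n) p) < 2 * n := by
  have := hw.mate_lt_length (i := zigR r (2 * n) p) (by rw [hlen]; exact zigR_lt hp)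
  rwa [hlen] at this

theorem isPerfectMatching_readMate (hw : IsDyck w) (hlen : w.length = 2 * n) :
    IsPerfectMatching (readMate r n w) (2 * n) := by
  have hmate : ∀ p < 2 * n, mate w (zigR r (2 * n) p) < 2 * n := fun p hp =>
    hw.mate_zigR_lt hlen hp
  refine ⟨fun p hp => ?_, fun p hp => ?_, fun p hp h => ?_⟩
  · unfold readMate unzigR
    have := hmate p hp
    split_ifs <;> omega
  · rw [readMate, readMate, zigR_unzigR (hmate p hp),
      hw.mate_mate (by rw [hlen]; exact zigR_lt hp),
      unzigR_zigR hp]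
  · have := congrArg (zigR r (2 * n)) h
    rw [readMate, zigR_unzigR (hmate p hp)] at this
    exact hw.mate_ne (by rw [hlen]; exact zigR_lt hp) this

theorem psiR_eq_openerWord (hw : IsDyck w) (hlen : w.length = 2 * n) :
    psiR r w = openerWord (readMate r n w) (2 * n) := by
  refine ext_getElem (by rw [length_psiR, hlen, length_openerWord]) fun p hp _ => ?_
  have hp' : p < 2 * n := by rwa [length_psiR, hlen] at hp
  have hz : zigR r (2 * n) p < w.length := by rw [hlen]; exact zigR_lt hp'
  have hread : (∃ p' < p, MatchPair w (zigR r (2 * n) p') (zigR r (2 * n) p)) ↔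
      readMate r n w p < p := by
    constructor
    · rintro ⟨p', hp'p, hm⟩
      rwa [readMate, mate_eq hm.symm, unzigR_zigR (by omega)]
    · intro h
      refine ⟨_, h, ?_⟩
      rw [readMate, zigR_unzigR (hw.mate_zigR_lt hlen hp')]
      exact (hw.matchPair_mate hz).symm
  have hne := (isPerfectMatching_readMate (r := r) hw hlen).ne p hp'
  simp only [psiR, List.getElem_ofFn, openerWord, getElem_map, getElem_range, hlen]
  split_ifs with h
  · exact (decide_eq_false (by have := hread.1 h; omega)).symm
  · exact (decide_eq_true (by have := mt hread.2 h; omega)).symm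

theorem readMate_two_mul_eq_iff (hw : IsDyck w) (hlen : w.length = 2 * n) (hrk : r ≤ k)
    (hkn : k < n) :
    readMate r n w (2 * k) = 2 * k + 1 ↔ Matched w (k + r) (2 * n + r - 1 - k) := by
  have hr : r ≤ n := by omega
  constructor
  · intro h
    have hm := congrArg (zigR r (2 * n)) h
    rw [readMate, zigR_two_mul hrk, zigR_two_mul_add_one hrk,
      zigR_unzigR (zigR_two_mul (n := n) hrk ▸ hw.mate_zigR_lt hlen (by omega))] at hm
    rcases hm ▸ hw.matchPair_mate (i := k + r) (by omega) with h' | h'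
    · exact h'
    · exact absurd h'.lt (by omega)
  · intro h
    rw [readMate, zigR_two_mul hrk, mate_eq (Or.inl h), ← zigR_two_mul_add_one hrk,
      unzigR_zigR (by omega)]

theorem Matched.mapsTo_readMate (hw : IsDyck w) (hlen : w.length = 2 * n) (hrk : r ≤ k)
    (hkn : k < n) (h : Matched w (k + r) (2 * n + r - 1 - k)) :
    MapsTo (readMate r n w) (Iio (2 * k)) (Iio (2 * k)) := by
  intro q hq
  rw [mem_Iio] at hq ⊢
  have hz := zigR_lt (r := r) (show q < 2 * n by omega)
  have hout : zigR r (2 * n) q ∉ Icc (k + r) (2 * n + r - 1 - k) := by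
    rwa [← unzigR_lt_two_mul_iff hrk hkn hz, unzigR_zigR (by omega)]
  rw [readMate, unzigR_lt_two_mul_iff hrk hkn (hw.mate_zigR_lt hlen (by omega))]
  exact hw.mate_notMem_Icc h (by omega) hout

theorem matched_iff_exists_hill (hw : IsDyck w) (hlen : w.length = 2 * n) (hrk : r ≤ k) :
    Matched w (k + r) (2 * n + r - 1 - k) ↔
      ∃ X Y, IsDyck X ∧ IsDyck Y ∧ psiR r w = X ++ true :: false :: Y ∧
        X.length = 2 * k := by
  rw [psiR_eq_openerWord hw hlen, (isPerfectMatching_readMate hw hlen).hill_iff]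
  constructor
  · intro h
    have hkn : k < n := by
      have := h.lt
      have := h.lt_length
      omega
    exact ⟨by omega, (readMate_two_mul_eq_iff hw hlen hrk hkn).2 h,
      h.mapsTo_readMate hw hlen hrk hkn⟩
  · rintro ⟨hkn, hτ, -⟩
    exact (readMate_two_mul_eq_iff hw hlen hrk (by omega)).1 hτ

end Psi

section Counting

variable {r n : ℕ} {w : List Bool}

theorem tunnels_eq_image (hlen : w.length = 2 * n) :
    {i | ∃ A B C : List Bool, IsDyck B ∧ w = A ++ true :: (B ++ false :: C) ∧
        A.length = i ∧ A.length = C.length + 2 * r} =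
      (· + r) '' {k | r ≤ k ∧ Matched w (k + r) (2 * n + r - 1 - k)} := by
  ext i
  simp only [mem_ofPred_eq, mem_image]
  constructor
  · rintro ⟨A, B, C, hB, hw, rfl, hAC⟩
    have := congrArg length hw
    simp only [length_append, length_cons] at this
    exact ⟨A.length - r, ⟨by omega, A, B, C, hB, hw, by omega, by omega⟩, by omega⟩
  · rintro ⟨k, ⟨-, A, B, C, hB, hw, hA, hb⟩, rfl⟩
    have := congrArg length hw
    simp only [length_append, length_cons] at this
    exact ⟨A, B, C, hB, hw, hA, by omega⟩

theorem hillsAfter_eq_image (hw : IsDyck w) (hlen : w.length = 2 * n) :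
    {i | ∃ X Y : List Bool, IsDyck X ∧ IsDyck Y ∧ psiR r w = X ++ true :: false :: Y ∧
        X.length = i ∧ 2 * r ≤ X.length} =
      (2 * ·) '' {k | r ≤ k ∧ Matched w (k + r) (2 * n + r - 1 - k)} := by
  ext i
  simp only [mem_ofPred_eq, mem_image]
  constructor
  · rintro ⟨X, Y, hX, hY, hXY, rfl, hrX⟩
    have hrk : r ≤ X.count true := by have := hX.length_eq; omega
    exact ⟨X.count true, ⟨hrk, (matched_iff_exists_hill hw hlen hrk).2
      ⟨X, Y, hX, hY, hXY, hX.length_eq⟩⟩, hX.length_eq.symm⟩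
  · rintro ⟨k, ⟨hrk, h⟩, rfl⟩
    obtain ⟨X, Y, hX, hY, hXY, hXk⟩ := (matched_iff_exists_hill hw hlen hrk).1 h
    exact ⟨X, Y, hX, hY, hXY, hXk, by omega⟩

end Counting

/-- tunnels of `D ∈ D_n` with midpoint at `x = n + r` (i.e. `|A| = |C| + 2r`)
correspond in number to hills of `D' = Ψ_r(D)` in `x > 2r` (i.e. `|X| ≥ 2r`). -/
theorem tunEq_eq_numHillsAfter (r n : ℕ) (D : List Bool) (hD : IsDyck D)
    (hlen : D.length = 2 * n) :
    tunEq r D = numHillsAfter r (psiR r D) := by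
  rw [tunEq, numHillsAfter, tunnels_eq_image hlen, hillsAfter_eq_image hD hlen,
    Set.ncard_image_of_injective _ (add_left_injective r),
    Set.ncard_image_of_injective _ (mul_right_injective₀ two_ne_zero)]

end DyckBij
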